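/- Fix 1 ≤ k < n and let G be the graph whose vertex set is the k-slice V = {x ∈ {0,1}^n : Σᵢ xᵢ = k}, with x ~ y whenever x and y differ in exactly two coordinates. Then Ric(G) = 1 + n/2: for every f:V→ℝ and every vertex x, Γ₂(f)(x) ≥ (1 + n/2)·Γ(f)(x), and 1 + n/2 is the largest constant with this property. -/

import Mathlib

noncomputable section
open Matrix

/-- The graph Laplacian: `Δ f (x) = Σ_{y ~ x} (f y - f x)`. -/
def lap {V : Type*} (G : SimpleGraph V) (f : V → ℝ) (x : V) : ℝ :=
  ∑ᶠ y ∈ {y | G.Adj x y}, (f y - f x)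

/-- The carré du champ `Γ(f,g)(x) = (1/2) Σ_{y ~ x} (f x - f y)(g x - g y)`. -/
def gam {V : Type*} (G : SimpleGraph V) (f g : V → ℝ) (x : V) : ℝ :=
  (1/2) * ∑ᶠ y ∈ {y | G.Adj x y}, (f x - f y) * (g x - g y)

/-- The iterated carré du champ `Γ₂(f) = (1/2) Δ Γ(f) - Γ(f, Δ f)`. -/
def gam2 {V : Type*} (G : SimpleGraph V) (f : V → ℝ) (x : V) : ℝ :=
  (1/2) * lap G (gam G f f) x - gam G f (lap G f) x

/-- `Ric(G) ≥ K` : the Bochner inequality `Γ₂(f)(x) ≥ K Γ(f)(x)` holds for all `f, x`. -/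
def RicGE {V : Type*} (G : SimpleGraph V) (K : ℝ) : Prop :=
  ∀ (f : V → ℝ) (x : V), K * gam G f f x ≤ gam2 G f x

/-- The `k`-slice of the `n`-cube: 0/1-vectors with exactly `k` ones. -/
def Slice (n k : ℕ) : Type :=
  {x : Fin n → Bool // (Finset.univ.filter fun i => x i = true).card = k}

/-- The slice graph: two 0/1-vectors with `k` ones are adjacent iff they differ in
exactly two coordinates (i.e. a transposition). -/
def sliceGraph (n k : ℕ) : SimpleGraph (Slice n k) where
  Adj x y := (Finset.univ.filter fun i => x.1 i ≠ y.1 i).card = 2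
  symm := ⟨by
    intro x y h
    have : (Finset.univ.filter fun i => y.1 i ≠ x.1 i)
        = (Finset.univ.filter fun i => x.1 i ≠ y.1 i) := by
      apply Finset.filter_congr
      intro i _
      exact ⟨Ne.symm, Ne.symm⟩
    rw [this]
    exact h⟩
  loopless := ⟨by intro x h; simp at h⟩

/-!
Write `S`, `T` for the ones and zeros of a vertex `x`. Its neighbours are the transpositions
`x ∘ (i j)` with `i ∈ S`, `j ∈ T`, and the neighbours of `x ∘ (i j)` are `x ∘ (u v) ∘ (i j)`,
so the local Bochner formula expresses `4 Γ₂(f)(x) - 2 (n + 2) Γ(f)(x)` as a quadratic form in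
the increments `a i j` of `f` along edges and `B i j u v` along paths of length two, summed over
`S × T × S × T`. When `u ≠ i` and `v ≠ j` the four paths through the rectangle `{i, u} × {j, v}`
end at the same vertex, so `B` is invariant under the Klein four-group swapping `i ↔ u` and
`j ↔ v`; averaging over this group turns each summand into the sum of squares `rectSlack`.
All these squares vanish for `y ↦ #(zeros x ∩ ones y)`, which shows that `1 + n / 2` is optimal.
-/

open Finset

section Bochner

variable {V : Type*} (G : SimpleGraph V) [G.LocallyFinite]

lemma lap_eq_sum (f : V → ℝ) (x : V) :
    lap G f x = ∑ y ∈ G.neighborFinset x, (f y - f x) := by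
  rw [lap, ← finsum_mem_coe_finset, SimpleGraph.coe_neighborFinset]
  rfl

lemma gam_eq_sum (f g : V → ℝ) (x : V) :
    gam G f g x = 1 / 2 * ∑ y ∈ G.neighborFinset x, (f x - f y) * (g x - g y) := by
  rw [gam, ← finsum_mem_coe_finset, SimpleGraph.coe_neighborFinset]
  rfl

lemma gam2_eq_sum (f : V → ℝ) (x : V) :
    gam2 G f x = 1 / 4 * ∑ y ∈ G.neighborFinset x,
        (∑ z ∈ G.neighborFinset y, (f x - 2 * f y + f z) ^ 2
          - (G.degree x + G.degree y) * (f x - f y) ^ 2)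
      + 1 / 2 * lap G f x ^ 2 := by
  have sum_const_eq (y : V) (c : ℝ) : ∑ _z ∈ G.neighborFinset y, c = G.degree y * c := by
    rw [sum_const, SimpleGraph.card_neighborFinset_eq_degree, nsmul_eq_mul]
  have hy (y : V) : gam G f f y + (f x - f y) * lap G f y
      = 1 / 2 * (∑ z ∈ G.neighborFinset y, (f x - 2 * f y + f z) ^ 2
          - G.degree y * (f x - f y) ^ 2) := by
    rw [gam_eq_sum, lap_eq_sum, ← sum_const_eq, ← sum_sub_distrib]
    simp only [mul_sum, ← sum_add_distrib]
    exact sum_congr rfl fun z _ => by ring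
  have hcross : ∑ y ∈ G.neighborFinset x, (f x - f y) * (lap G f x - lap G f y)
      = - lap G f x ^ 2 - ∑ y ∈ G.neighborFinset x, (f x - f y) * lap G f y := by
    have hlap : ∑ y ∈ G.neighborFinset x, (f x - f y) = - lap G f x := by
      rw [lap_eq_sum, ← sum_neg_distrib]
      exact sum_congr rfl fun y _ => by ring
    simp only [mul_sub, sum_sub_distrib, ← sum_mul, hlap]
    ring
  have hgam : gam G f f x = 1 / 2 * ∑ y ∈ G.neighborFinset x, (f x - f y) ^ 2 := by
    simp only [gam_eq_sum, sq]
  have hsum := sum_congr rfl fun y (_ : y ∈ G.neighborFinset x) => hy y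
  rw [gam2, lap_eq_sum G (gam G f f), gam_eq_sum G f (lap G f), hcross]
  simp only [add_mul, sum_sub_distrib, sum_add_distrib, sum_const_eq, ← mul_sum] at hsum ⊢
  rw [hgam]
  linear_combination (1/2 : ℝ) * hsum

end Bochner

section RectangleSums

variable {ι κ : Type*} (S : Finset ι) (T : Finset κ)

lemma sum_rect_swap_left (F : ι → κ → ι → κ → ℝ) :
    ∑ i ∈ S, ∑ j ∈ T, ∑ u ∈ S, ∑ v ∈ T, F u j i v
      = ∑ i ∈ S, ∑ j ∈ T, ∑ u ∈ S, ∑ v ∈ T, F i j u v := calc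
  _ = ∑ i ∈ S, ∑ u ∈ S, ∑ j ∈ T, ∑ v ∈ T, F u j i v := sum_congr rfl fun _ _ => sum_comm
  _ = ∑ u ∈ S, ∑ i ∈ S, ∑ j ∈ T, ∑ v ∈ T, F u j i v := sum_comm
  _ = _ := sum_congr rfl fun _ _ => sum_comm

lemma sum_rect_swap_right (F : ι → κ → ι → κ → ℝ) :
    ∑ i ∈ S, ∑ j ∈ T, ∑ u ∈ S, ∑ v ∈ T, F i v u j
      = ∑ i ∈ S, ∑ j ∈ T, ∑ u ∈ S, ∑ v ∈ T, F i j u v := by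
  refine sum_congr rfl fun i _ => ?_
  calc _ = ∑ u ∈ S, ∑ j ∈ T, ∑ v ∈ T, F i v u j := sum_comm
    _ = ∑ u ∈ S, ∑ v ∈ T, ∑ j ∈ T, F i v u j := sum_congr rfl fun _ _ => sum_comm
    _ = _ := sum_comm

lemma sum_rect_eq_of_klein (F G : ι → κ → ι → κ → ℝ)
    (hFG : ∀ i ∈ S, ∀ j ∈ T, ∀ u ∈ S, ∀ v ∈ T,
      F i j u v + F u j i v + F i v u j + F u v i j
        = G i j u v + G u j i v + G i v u j + G u v i j) :
    ∑ i ∈ S, ∑ j ∈ T, ∑ u ∈ S, ∑ v ∈ T, F i j u v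
      = ∑ i ∈ S, ∑ j ∈ T, ∑ u ∈ S, ∑ v ∈ T, G i j u v := by
  have klein (H : ι → κ → ι → κ → ℝ) : ∑ i ∈ S, ∑ j ∈ T, ∑ u ∈ S, ∑ v ∈ T,
      (H i j u v + H u j i v + H i v u j + H u v i j)
        = 4 * ∑ i ∈ S, ∑ j ∈ T, ∑ u ∈ S, ∑ v ∈ T, H i j u v := by
    have h : ∑ i ∈ S, ∑ j ∈ T, ∑ u ∈ S, ∑ v ∈ T, H u v i j
        = ∑ i ∈ S, ∑ j ∈ T, ∑ u ∈ S, ∑ v ∈ T, H i j u v :=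
      (sum_rect_swap_right S T fun i j u v => H u j i v).trans (sum_rect_swap_left S T H)
    simp only [sum_add_distrib]
    rw [sum_rect_swap_left S T H, sum_rect_swap_right S T H, h]
    ring
  have h := klein F
  rw [sum_congr rfl fun i hi => sum_congr rfl fun j hj => sum_congr rfl fun u hu =>
    sum_congr rfl fun v hv => hFG i hi j hj u hu v hv, klein G] at h
  linarith

variable [DecidableEq ι] [DecidableEq κ]

lemma sum_rect_weight (a : ι → κ → ℝ) :
    ∑ i ∈ S, ∑ j ∈ T, ∑ u ∈ S, ∑ v ∈ T,
        ((2 + (if u = i then 1 else 0) + (if v = j then 1 else 0)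
          + (if u = i ∧ v = j then 2 else 0)) * a i j ^ 2 - 2 * a i j * a u v)
      = (2 * #S * #T + #S + #T + 2) * ∑ i ∈ S, ∑ j ∈ T, a i j ^ 2
        - 2 * (∑ i ∈ S, ∑ j ∈ T, a i j) ^ 2 := by
  have hw : ∀ i ∈ S, ∀ j ∈ T, ∑ u ∈ S, ∑ v ∈ T, ((2 : ℝ) + (if u = i then 1 else 0)
      + (if v = j then 1 else 0) + (if u = i ∧ v = j then 2 else 0))
      = 2 * #S * #T + #S + #T + 2 := by
    intro i hi j hj
    simp [sum_add_distrib, ite_and, hi, hj]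
    ring
  calc _ = ∑ i ∈ S, ∑ j ∈ T, ((2 * #S * #T + #S + #T + 2) * a i j ^ 2
        - 2 * a i j * ∑ i ∈ S, ∑ j ∈ T, a i j) := by
        refine sum_congr rfl fun i hi => sum_congr rfl fun j hj => ?_
        simp only [sum_sub_distrib, ← sum_mul, hw i hi j hj, mul_sum]
    _ = _ := by simp only [sum_sub_distrib, ← mul_sum, ← sum_mul]; ring

def rectSlack (a : ι → κ → ℝ) (B : ι → κ → ι → κ → ℝ) (i : ι) (j : κ) (u : ι) (v : κ) : ℝ :=
  if u = i then (a i j - a i v) ^ 2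
  else if v = j then (a i j - a u j) ^ 2
  else (B i j u v - (a i j + a i v + a u j + a u v) / 2) ^ 2
    + (a i j - a i v - a u j + a u v) ^ 2 / 4

lemma rectSlack_nonneg (a : ι → κ → ℝ) (B : ι → κ → ι → κ → ℝ) (i : ι) (j : κ) (u : ι)
    (v : κ) : 0 ≤ rectSlack a B i j u v := by
  unfold rectSlack
  split_ifs <;> positivity

theorem sum_rect_sq_eq (a : ι → κ → ℝ) (B : ι → κ → ι → κ → ℝ)
    (hdiag : ∀ i ∈ S, ∀ j ∈ T, B i j i j = 0)
    (hrow : ∀ i ∈ S, ∀ j ∈ T, ∀ v ∈ T, v ≠ j → B i j i v = a i v)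
    (hcol : ∀ i ∈ S, ∀ j ∈ T, ∀ u ∈ S, u ≠ i → B i j u j = a u j)
    (hleft : ∀ i ∈ S, ∀ j ∈ T, ∀ u ∈ S, ∀ v ∈ T, u ≠ i → v ≠ j → B u j i v = B i j u v)
    (hright : ∀ i ∈ S, ∀ j ∈ T, ∀ u ∈ S, ∀ v ∈ T, u ≠ i → v ≠ j → B i v u j = B i j u v) :
    ∑ i ∈ S, ∑ j ∈ T, ∑ u ∈ S, ∑ v ∈ T, (B i j u v - 2 * a i j) ^ 2
      = (2 * #S * #T + #S + #T + 2) * ∑ i ∈ S, ∑ j ∈ T, a i j ^ 2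
        - 2 * (∑ i ∈ S, ∑ j ∈ T, a i j) ^ 2
        + ∑ i ∈ S, ∑ j ∈ T, ∑ u ∈ S, ∑ v ∈ T, rectSlack a B i j u v := by
  rw [← sum_rect_weight]
  simp only [← sum_add_distrib]
  refine sum_rect_eq_of_klein S T _ _ fun i hi j hj u hu v hv => ?_
  by_cases hui : u = i <;> by_cases hvj : v = j
  · subst u v
    simp [rectSlack, hdiag i hi j hj]
    ring
  · subst u
    simp [rectSlack, hvj, Ne.symm hvj, hrow i hi j hj v hv hvj, hrow i hi v hv j hj (Ne.symm hvj)]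
    ring
  · subst v
    simp [rectSlack, hui, Ne.symm hui, hcol i hi j hj u hu hui, hcol u hu j hj i hi (Ne.symm hui)]
    ring
  · have hcorner : B u v i j = B i j u v :=
      (hleft i hi v hv u hu j hj hui (Ne.symm hvj)).trans (hright i hi j hj u hu v hv hui hvj)
    simp [rectSlack, hui, hvj, Ne.symm hui, Ne.symm hvj, hleft i hi j hj u hu v hv hui hvj,
      hright i hi j hj u hu v hv hui hvj, hcorner]
    ring

end RectangleSums

namespace Slice

variable {n k : ℕ}

instance : Fintype (Slice n k) := Subtype.fintype _

instance : DecidableEq (Slice n k) := Subtype.instDecidableEq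

instance : DecidableRel (sliceGraph n k).Adj := fun _ _ => Nat.decEq _ _

@[ext] lemma ext {x y : Slice n k} (h : ∀ t, x.1 t = y.1 t) : x = y := Subtype.ext (funext h)

def ones (x : Slice n k) : Finset (Fin n) := univ.filter fun t => x.1 t = true

def zeros (x : Slice n k) : Finset (Fin n) := univ.filter fun t => x.1 t = false

@[simp] lemma mem_ones {x : Slice n k} {t : Fin n} : t ∈ ones x ↔ x.1 t = true := by
  simp [ones]

@[simp] lemma mem_zeros {x : Slice n k} {t : Fin n} : t ∈ zeros x ↔ x.1 t = false := by
  simp [zeros]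

lemma card_ones (x : Slice n k) : #(ones x) = k := x.2

lemma card_ones_add_card_zeros (x : Slice n k) : #(ones x) + #(zeros x) = n := by
  simpa [ones, zeros] using card_filter_add_card_filter_not (s := univ) fun t => x.1 t = true

def perm (x : Slice n k) (σ : Equiv.Perm (Fin n)) : Slice n k :=
  ⟨x.1 ∘ σ, (card_equiv σ fun t => by simp).trans x.2⟩

@[simp] lemma perm_apply (x : Slice n k) (σ : Equiv.Perm (Fin n)) (t : Fin n) :
    (x.perm σ).1 t = x.1 (σ t) := rfl

lemma perm_perm (x : Slice n k) (σ τ : Equiv.Perm (Fin n)) :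
    (x.perm σ).perm τ = x.perm (σ * τ) := rfl

@[simp] lemma perm_one (x : Slice n k) : x.perm 1 = x := rfl

lemma perm_swap_of_eq {x : Slice n k} {i j : Fin n} (h : x.1 i = x.1 j) :
    x.perm (Equiv.swap i j) = x := by
  ext t
  simp only [perm_apply, Equiv.swap_apply_def]
  split_ifs <;> simp_all

lemma adj_perm_iff {x y : Slice n k} (σ : Equiv.Perm (Fin n)) :
    (sliceGraph n k).Adj (x.perm σ) (y.perm σ) ↔ (sliceGraph n k).Adj x y := by
  change #(univ.filter fun t => x.1 (σ t) ≠ y.1 (σ t)) = 2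
    ↔ #(univ.filter fun t => x.1 t ≠ y.1 t) = 2
  rw [card_equiv (t := univ.filter fun t => x.1 t ≠ y.1 t) σ fun t => by simp]

lemma adj_perm_swap {x : Slice n k} {i j : Fin n} (hi : x.1 i = true) (hj : x.1 j = false) :
    (sliceGraph n k).Adj x (x.perm (Equiv.swap i j)) := by
  have hij : i ≠ j := by rintro rfl; simp_all
  change #(univ.filter fun t => x.1 t ≠ x.1 (Equiv.swap i j t)) = 2
  convert card_pair hij
  ext t
  by_cases hti : t = i <;> by_cases htj : t = j <;> simp_all [Equiv.swap_apply_of_ne_of_ne]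

lemma exists_perm_swap_of_adj {x y : Slice n k} (h : (sliceGraph n k).Adj x y) :
    ∃ i ∈ ones x, ∃ j ∈ zeros x, x.perm (Equiv.swap i j) = y := by
  have hdiff : univ.filter (fun t => x.1 t ≠ y.1 t) = ones x \ ones y ∪ ones y \ ones x := by
    ext t
    cases hx : x.1 t <;> cases hy : y.1 t <;> simp [hx, hy]
  have hcard : #(ones x \ ones y) = #(ones y \ ones x) :=
    card_sdiff_comm (by rw [card_ones, card_ones])
  have h2 : #(ones x \ ones y) + #(ones y \ ones x) = 2 := by
    rw [← card_union_of_disjoint disjoint_sdiff_sdiff, ← hdiff]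
    exact h
  obtain ⟨i, hi⟩ := card_eq_one.1 (show #(ones x \ ones y) = 1 by omega)
  obtain ⟨j, hj⟩ := card_eq_one.1 (show #(ones y \ ones x) = 1 by omega)
  have hi' : ∀ t, (x.1 t = true ∧ y.1 t = false) ↔ t = i := fun t => by
    simpa using congrArg (t ∈ ·) hi
  have hj' : ∀ t, (y.1 t = true ∧ x.1 t = false) ↔ t = j := fun t => by
    simpa using congrArg (t ∈ ·) hj
  obtain ⟨hxi, hyi⟩ := (hi' i).2 rfl
  obtain ⟨hyj, hxj⟩ := (hj' j).2 rfl
  refine ⟨i, mem_ones.2 hxi, j, mem_zeros.2 hxj, ?_⟩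
  ext t
  by_cases hti : t = i
  · simp_all
  by_cases htj : t = j
  · simp_all
  rw [perm_apply, Equiv.swap_apply_of_ne_of_ne hti htj]
  cases hx : x.1 t <;> cases hy : y.1 t
  · rfl
  · exact absurd ((hj' t).1 ⟨hy, hx⟩) htj
  · exact absurd ((hi' t).1 ⟨hx, hy⟩) hti
  · rfl

lemma perm_swap_injOn (x : Slice n k) :
    Set.InjOn (fun p : Fin n × Fin n => x.perm (Equiv.swap p.1 p.2)) ↑(ones x ×ˢ zeros x) := by
  rintro ⟨i, j⟩ hp ⟨i', j'⟩ hq heq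
  simp only [coe_product, Set.mem_prod, mem_coe, mem_ones, mem_zeros] at hp hq
  have hi : x.1 j = x.1 (Equiv.swap i' j' i) := by
    simpa using congrArg (fun y : Slice n k => y.1 i) heq
  have hj : x.1 i = x.1 (Equiv.swap i' j' j) := by
    simpa using congrArg (fun y : Slice n k => y.1 j) heq
  have hii' : i = i' := by
    by_contra hne
    have hij' : i ≠ j' := by rintro rfl; simp_all
    rw [Equiv.swap_apply_of_ne_of_ne hne hij'] at hi
    simp_all
  have hjj' : j = j' := by
    by_contra hne
    have hji' : j ≠ i' := by rintro rfl; simp_all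
    rw [Equiv.swap_apply_of_ne_of_ne hji' hne] at hj
    simp_all
  rw [hii', hjj']

lemma perm_swap_apply {x : Slice n k} {i j : Fin n} (hi : x.1 i = true) (hj : x.1 j = false)
    (t : Fin n) :
    (x.perm (Equiv.swap i j)).1 t = if t = i then false else if t = j then true else x.1 t := by
  simp only [perm_apply, Equiv.swap_apply_def]
  split_ifs <;> simp_all

lemma perm_swap_perm_swap_apply {x : Slice n k} {i u j v : Fin n} (hi : x.1 i = true)
    (hu : x.1 u = true) (hj : x.1 j = false) (hv : x.1 v = false) (hui : u ≠ i) (hvj : v ≠ j)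
    (t : Fin n) :
    ((x.perm (Equiv.swap u v)).perm (Equiv.swap i j)).1 t
      = if t = i ∨ t = u then false else if t = j ∨ t = v then true else x.1 t := by
  simp only [perm_apply, Equiv.swap_apply_def]
  split_ifs <;> simp_all

lemma perm_swap_perm_swap_self (x : Slice n k) (i j : Fin n) :
    (x.perm (Equiv.swap i j)).perm (Equiv.swap i j) = x := by
  rw [perm_perm, Equiv.swap_mul_self, perm_one]

lemma perm_swap_perm_swap_of_row {x : Slice n k} {i j v : Fin n} (hi : x.1 i = true)
    (hj : x.1 j = false) (hv : x.1 v = false) (hvj : v ≠ j) :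
    (x.perm (Equiv.swap i v)).perm (Equiv.swap i j) = x.perm (Equiv.swap i v) := by
  have hji : j ≠ i := by rintro rfl; simp_all
  exact perm_swap_of_eq (by
    rw [perm_apply, perm_apply, Equiv.swap_apply_left, Equiv.swap_apply_of_ne_of_ne hji hvj.symm,
      hv, hj])

lemma perm_swap_perm_swap_of_col {x : Slice n k} {i j u : Fin n} (hi : x.1 i = true)
    (hj : x.1 j = false) (hu : x.1 u = true) (hui : u ≠ i) :
    (x.perm (Equiv.swap u j)).perm (Equiv.swap i j) = x.perm (Equiv.swap u j) := by
  have hij : i ≠ j := by rintro rfl; simp_all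
  exact perm_swap_of_eq (by
    rw [perm_apply, perm_apply, Equiv.swap_apply_of_ne_of_ne hui.symm hij, Equiv.swap_apply_right,
      hi, hu])

lemma perm_swap_perm_swap_comm_left {x : Slice n k} {i u j v : Fin n} (hi : x.1 i = true)
    (hu : x.1 u = true) (hj : x.1 j = false) (hv : x.1 v = false) (hui : u ≠ i)
    (hvj : v ≠ j) :
    (x.perm (Equiv.swap i v)).perm (Equiv.swap u j)
      = (x.perm (Equiv.swap u v)).perm (Equiv.swap i j) := by
  ext t
  rw [perm_swap_perm_swap_apply hu hi hj hv (Ne.symm hui) hvj,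
    perm_swap_perm_swap_apply hi hu hj hv hui hvj]
  simp only [or_comm]

lemma perm_swap_perm_swap_comm_right {x : Slice n k} {i u j v : Fin n} (hi : x.1 i = true)
    (hu : x.1 u = true) (hj : x.1 j = false) (hv : x.1 v = false) (hui : u ≠ i)
    (hvj : v ≠ j) :
    (x.perm (Equiv.swap u j)).perm (Equiv.swap i v)
      = (x.perm (Equiv.swap u v)).perm (Equiv.swap i j) := by
  ext t
  rw [perm_swap_perm_swap_apply hi hu hv hj hui (Ne.symm hvj),
    perm_swap_perm_swap_apply hi hu hj hv hui hvj]
  simp only [or_comm]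

variable {M : Type*} [AddCommMonoid M]

lemma sum_neighborFinset (x : Slice n k) (g : Slice n k → M) :
    ∑ y ∈ (sliceGraph n k).neighborFinset x, g y
      = ∑ i ∈ ones x, ∑ j ∈ zeros x, g (x.perm (Equiv.swap i j)) := by
  have hN : (sliceGraph n k).neighborFinset x
      = (ones x ×ˢ zeros x).image fun p => x.perm (Equiv.swap p.1 p.2) := by
    ext y
    simp only [SimpleGraph.mem_neighborFinset, mem_image, mem_product, Prod.exists]
    constructor
    · intro h
      obtain ⟨i, hi, j, hj, rfl⟩ := exists_perm_swap_of_adj h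
      exact ⟨i, j, ⟨hi, hj⟩, rfl⟩
    · rintro ⟨i, j, ⟨hi, hj⟩, rfl⟩
      exact adj_perm_swap (mem_ones.1 hi) (mem_zeros.1 hj)
  rw [hN, sum_image (perm_swap_injOn x), sum_product]

lemma sum_neighborFinset_perm (x : Slice n k) (σ : Equiv.Perm (Fin n)) (g : Slice n k → M) :
    ∑ y ∈ (sliceGraph n k).neighborFinset (x.perm σ), g y
      = ∑ y ∈ (sliceGraph n k).neighborFinset x, g (y.perm σ) := by
  refine sum_nbij' (·.perm σ⁻¹) (·.perm σ) (fun y hy => ?_) (fun y hy => ?_)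
    (fun y _ => ?_) (fun y _ => ?_) (fun y _ => ?_)
  · rw [SimpleGraph.mem_neighborFinset, ← adj_perm_iff σ, perm_perm, inv_mul_cancel, perm_one]
    exact (SimpleGraph.mem_neighborFinset _ _ _).1 hy
  · simpa [SimpleGraph.mem_neighborFinset, adj_perm_iff] using hy
  · simp [perm_perm]
  · simp [perm_perm]
  · simp [perm_perm]

lemma le_of_slice (x : Slice n k) : k ≤ n := by
  have := card_ones_add_card_zeros x
  rw [card_ones] at this
  omega

lemma card_zeros (x : Slice n k) : #(zeros x) = n - k := by
  have := card_ones_add_card_zeros x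
  rw [card_ones] at this
  omega

lemma degree_eq (x : Slice n k) : (sliceGraph n k).degree x = k * (n - k) := by
  rw [← SimpleGraph.card_neighborFinset_eq_degree, card_eq_sum_ones, sum_neighborFinset]
  simp [card_ones, card_zeros]

def edgeIncr (f : Slice n k → ℝ) (x : Slice n k) (i j : Fin n) : ℝ :=
  f (x.perm (Equiv.swap i j)) - f x

def pathIncr (f : Slice n k → ℝ) (x : Slice n k) (i j u v : Fin n) : ℝ :=
  f ((x.perm (Equiv.swap u v)).perm (Equiv.swap i j)) - f x

lemma gam_eq_sum_edgeIncr (f : Slice n k → ℝ) (x : Slice n k) :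
    gam (sliceGraph n k) f f x = 1 / 2 * ∑ i ∈ ones x, ∑ j ∈ zeros x, edgeIncr f x i j ^ 2 := by
  rw [gam_eq_sum, sum_neighborFinset]
  simp only [edgeIncr]
  congr 1
  exact sum_congr rfl fun i _ => sum_congr rfl fun j _ => by ring

lemma lap_eq_sum_edgeIncr (f : Slice n k → ℝ) (x : Slice n k) :
    lap (sliceGraph n k) f x = ∑ i ∈ ones x, ∑ j ∈ zeros x, edgeIncr f x i j := by
  rw [lap_eq_sum, sum_neighborFinset]
  rfl

lemma gam2_eq_sum_pathIncr (f : Slice n k → ℝ) (x : Slice n k) :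
    gam2 (sliceGraph n k) f x
      = 1 / 4 * ∑ i ∈ ones x, ∑ j ∈ zeros x, ∑ u ∈ ones x, ∑ v ∈ zeros x,
          (pathIncr f x i j u v - 2 * edgeIncr f x i j) ^ 2
        - k * (n - k) * gam (sliceGraph n k) f f x
        + 1 / 2 * lap (sliceGraph n k) f x ^ 2 := by
  have hy (i j : Fin n) :
      ∑ u ∈ ones x, ∑ v ∈ zeros x, (f x - 2 * f (x.perm (Equiv.swap i j))
          + f ((x.perm (Equiv.swap u v)).perm (Equiv.swap i j))) ^ 2
        - (k * (n - k) + k * (n - k) : ℝ) * (f x - f (x.perm (Equiv.swap i j))) ^ 2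
      = ∑ u ∈ ones x, ∑ v ∈ zeros x, (pathIncr f x i j u v - 2 * edgeIncr f x i j) ^ 2
        - 2 * k * (n - k) * edgeIncr f x i j ^ 2 := by
    rw [edgeIncr]
    congr 1
    · exact sum_congr rfl fun u _ => sum_congr rfl fun v _ => by rw [pathIncr]; ring
    · ring
  rw [gam2_eq_sum, gam_eq_sum_edgeIncr, sum_neighborFinset x]
  simp only [sum_neighborFinset_perm, sum_neighborFinset x, degree_eq, Nat.cast_mul,
    Nat.cast_sub (le_of_slice x), hy, sum_sub_distrib, ← mul_sum]
  ring

theorem four_mul_gam2_eq (f : Slice n k → ℝ) (x : Slice n k) :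
    4 * gam2 (sliceGraph n k) f x = 2 * (n + 2) * gam (sliceGraph n k) f f x
      + ∑ i ∈ ones x, ∑ j ∈ zeros x, ∑ u ∈ ones x, ∑ v ∈ zeros x,
          rectSlack (edgeIncr f x) (pathIncr f x) i j u v := by
  have key := sum_rect_sq_eq (ones x) (zeros x) (edgeIncr f x) (pathIncr f x)
    (fun i _ j _ => by simp [pathIncr, perm_swap_perm_swap_self])
    (fun i hi j hj v hv hvj => by
      simp only [mem_ones, mem_zeros] at hi hj hv
      rw [pathIncr, perm_swap_perm_swap_of_row hi hj hv hvj, edgeIncr])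
    (fun i hi j hj u hu hui => by
      simp only [mem_ones, mem_zeros] at hi hj hu
      rw [pathIncr, perm_swap_perm_swap_of_col hi hj hu hui, edgeIncr])
    (fun i hi j hj u hu v hv hui hvj => by
      simp only [mem_ones, mem_zeros] at hi hj hu hv
      rw [pathIncr, pathIncr, perm_swap_perm_swap_comm_left hi hu hj hv hui hvj])
    (fun i hi j hj u hu v hv hui hvj => by
      simp only [mem_ones, mem_zeros] at hi hj hu hv
      rw [pathIncr, pathIncr, perm_swap_perm_swap_comm_right hi hu hj hv hui hvj])
  have hs : (#(ones x) : ℝ) = k := by rw [card_ones]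
  have ht : (#(zeros x) : ℝ) = n - k := by rw [card_zeros, Nat.cast_sub (le_of_slice x)]
  rw [gam2_eq_sum_pathIncr, key, lap_eq_sum_edgeIncr, gam_eq_sum_edgeIncr, hs, ht]
  ring

lemma nonempty_of_le (h : k ≤ n) : Nonempty (Slice n k) := by
  obtain ⟨s, -, hs⟩ := exists_subset_card_eq (s := (univ : Finset (Fin n))) (by simpa using h)
  exact ⟨⟨fun t => decide (t ∈ s), by simpa using hs⟩⟩

def crossCount (x y : Slice n k) : ℝ := #(zeros x ∩ ones y)

lemma crossCount_self (x : Slice n k) : crossCount x x = 0 := by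
  simp [crossCount, eq_empty_iff_forall_notMem]

lemma edgeIncr_crossCount {x : Slice n k} {i j : Fin n} (hi : x.1 i = true)
    (hj : x.1 j = false) : edgeIncr (crossCount x) x i j = 1 := by
  have hy : zeros x ∩ ones (x.perm (Equiv.swap i j)) = {j} := by
    ext t
    simp only [mem_inter, mem_zeros, mem_ones, perm_swap_apply hi hj, mem_singleton]
    by_cases hti : t = i <;> by_cases htj : t = j <;> simp_all
  rw [edgeIncr, crossCount_self, crossCount, hy]
  simp

lemma pathIncr_crossCount {x : Slice n k} {i u j v : Fin n} (hi : x.1 i = true)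
    (hu : x.1 u = true) (hj : x.1 j = false) (hv : x.1 v = false) (hui : u ≠ i)
    (hvj : v ≠ j) : pathIncr (crossCount x) x i j u v = 2 := by
  have hy : zeros x ∩ ones ((x.perm (Equiv.swap u v)).perm (Equiv.swap i j)) = {j, v} := by
    ext t
    simp only [mem_inter, mem_zeros, mem_ones, perm_swap_perm_swap_apply hi hu hj hv hui hvj,
      mem_insert, mem_singleton]
    by_cases hti : t = i <;> by_cases htu : t = u <;> by_cases htj : t = j <;>
      by_cases htv : t = v <;> simp_all
  rw [pathIncr, crossCount_self, crossCount, hy, card_pair hvj.symm]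
  norm_num

lemma rectSlack_crossCount {x : Slice n k} {i u j v : Fin n} (hi : i ∈ ones x)
    (hu : u ∈ ones x) (hj : j ∈ zeros x) (hv : v ∈ zeros x) :
    rectSlack (edgeIncr (crossCount x) x) (pathIncr (crossCount x) x) i j u v = 0 := by
  rw [mem_ones] at hi hu
  rw [mem_zeros] at hj hv
  unfold rectSlack
  split_ifs with hui hvj
  · simp [edgeIncr_crossCount hi hj, edgeIncr_crossCount hi hv]
  · simp [edgeIncr_crossCount hi hj, edgeIncr_crossCount hu hj]
  · rw [edgeIncr_crossCount hi hj, edgeIncr_crossCount hi hv, edgeIncr_crossCount hu hj,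
      edgeIncr_crossCount hu hv, pathIncr_crossCount hi hu hj hv hui hvj]
    norm_num

end Slice

open Slice

theorem ricGE_sliceGraph (n k : ℕ) : RicGE (sliceGraph n k) (1 + (n : ℝ) / 2) := by
  intro f x
  have h := four_mul_gam2_eq f x
  have hslack := sum_nonneg fun i (_ : i ∈ ones x) => sum_nonneg fun j (_ : j ∈ zeros x) =>
    sum_nonneg fun u (_ : u ∈ ones x) => sum_nonneg fun v (_ : v ∈ zeros x) =>
      rectSlack_nonneg (edgeIncr f x) (pathIncr f x) i j u v
  linarith

theorem le_of_ricGE_sliceGraph {n k : ℕ} (hk : 1 ≤ k) (hkn : k < n) {K : ℝ}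
    (hK : RicGE (sliceGraph n k) K) : K ≤ 1 + (n : ℝ) / 2 := by
  obtain ⟨x⟩ := nonempty_of_le hkn.le
  have h4 := four_mul_gam2_eq (crossCount x) x
  rw [sum_eq_zero fun i hi => sum_eq_zero fun j hj => sum_eq_zero fun u hu =>
    sum_eq_zero fun v hv => rectSlack_crossCount hi hu hj hv, add_zero] at h4
  have hgam : gam (sliceGraph n k) (crossCount x) (crossCount x) x = k * (n - k) / 2 := by
    rw [gam_eq_sum_edgeIncr, sum_congr rfl fun i hi => sum_congr rfl fun j hj => by
      rw [edgeIncr_crossCount (mem_ones.1 hi) (mem_zeros.1 hj)]]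
    simp [card_ones, card_zeros, Nat.cast_sub hkn.le]
    ring
  have hpos : 0 < gam (sliceGraph n k) (crossCount x) (crossCount x) x := by
    rw [hgam]
    have : (k : ℝ) < n := by exact_mod_cast hkn
    have : (1 : ℝ) ≤ k := by exact_mod_cast hk
    apply div_pos (mul_pos _ _) two_pos <;> linarith
  refine le_of_mul_le_mul_right ?_ hpos
  linarith [hK (crossCount x) x]

/-- for `1 ≤ k < n`, the `k`-slice of the hypercube with transpositions
has `Ric = 1 + n/2`. -/
theorem ric_slice (n k : ℕ) (hk : 1 ≤ k) (hkn : k < n) :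
    RicGE (sliceGraph n k) (1 + (n : ℝ) / 2) ∧
      ∀ K : ℝ, RicGE (sliceGraph n k) K → K ≤ 1 + (n : ℝ) / 2 :=
  ⟨ricGE_sliceGraph n k, fun _ => le_of_ricGE_sliceGraph hk hkn⟩
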